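/- For every r ≥ 0 and all indices b, c, f_1, …, f_r ∈ {1, …, n+4}: if R^î_{ĵ, b, c; f_1; …; f_r}(x) ≠ 0 for some î, ĵ ∈ {3, …, n+2} and some x ∈ ℝ^{n+4}, then b, c, f_1, …, f_r ∈ {n+3, n+4} and b ≠ c. -/

import Mathlib

namespace HolPaper

open Matrix

/-- Points of `ℝ^{n+4}`, with coordinates indexed by `Fin (n+4)`.
The paper's index `1` is `p1`, `2` is `p2`, `î ∈ {3,…,n+2}` is `ehat i` for `i : Fin n`,
`n+3` is `q1` and `n+4` is `q2`. -/
abbrev Pt (n : ℕ) := Fin (n + 4) → ℝ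

def p1 (n : ℕ) : Fin (n + 4) := ⟨0, by omega⟩
def p2 (n : ℕ) : Fin (n + 4) := ⟨1, by omega⟩
def ehat {n : ℕ} (i : Fin n) : Fin (n + 4) := ⟨i.1 + 2, by have := i.isLt; omega⟩
def q1 (n : ℕ) : Fin (n + 4) := ⟨n + 2, by omega⟩
def q2 (n : ℕ) : Fin (n + 4) := ⟨n + 3, by omega⟩

noncomputable section

variable {n N : ℕ}

/-- `u^î(x) = Σ_ĵ Σ_α (A_α)_{î-2,ĵ-2} x^ĵ (x^{n+3})^α`. -/
def u (A : Fin N → Matrix (Fin n) (Fin n) ℝ) (i : Fin n) (x : Pt n) : ℝ :=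
  ∑ j : Fin n, ∑ α : Fin N, A α i j * x (ehat j) * x (q1 n) ^ (α.1 + 1)

/-- `F(x) = Σ_î (x^î)²`. -/
def Fq (n : ℕ) (x : Pt n) : ℝ := ∑ i : Fin n, x (ehat i) ^ 2

/-- The Gram matrix `G(x)` of the metric. -/
def Gmet (A : Fin N → Matrix (Fin n) (Fin n) ℝ) (x : Pt n) :
    Matrix (Fin (n + 4)) (Fin (n + 4)) ℝ := fun a b =>
  (if (a = p1 n ∧ b = q1 n) ∨ (a = q1 n ∧ b = p1 n) then (1 : ℝ) else 0)
  + (if (a = p2 n ∧ b = q2 n) ∨ (a = q2 n ∧ b = p2 n) then (1 : ℝ) else 0)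
  + (∑ i : Fin n, if a = ehat i ∧ b = ehat i then (1 : ℝ) else 0)
  + (∑ i : Fin n, if (a = ehat i ∧ b = q2 n) ∨ (a = q2 n ∧ b = ehat i) then u A i x else 0)
  + (if (a = q1 n ∧ b = q1 n) ∨ (a = q2 n ∧ b = q2 n) then Fq n x else 0)

/-- Partial derivative `∂_b f` of a function on `ℝ^{n+4}`. -/
def pd (b : Fin (n + 4)) (f : Pt n → ℝ) (x : Pt n) : ℝ :=
  fderiv ℝ f x (Pi.single b 1)

/-- Christoffel symbols
`Γ^a_{bc} = ½ Σ_d G^{ad} (∂_b G_{dc} + ∂_c G_{bd} − ∂_d G_{bc})`. -/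
def Γchr (A : Fin N → Matrix (Fin n) (Fin n) ℝ) (a b c : Fin (n + 4)) (x : Pt n) : ℝ :=
  (1 / 2) * ∑ d : Fin (n + 4), (Gmet A x)⁻¹ a d *
    (pd b (fun y => Gmet A y d c) x + pd c (fun y => Gmet A y b d) x
      - pd d (fun y => Gmet A y b c) x)

/-- Curvature components
`R^a_{b,c,d} = ∂_c Γ^a_{db} − ∂_d Γ^a_{cb} + Σ_e (Γ^a_{ce} Γ^e_{db} − Γ^a_{de} Γ^e_{cb})`. -/
def Rcurv (A : Fin N → Matrix (Fin n) (Fin n) ℝ) (a b c d : Fin (n + 4)) (x : Pt n) : ℝ :=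
  pd c (Γchr A a d b) x - pd d (Γchr A a c b) x
  + ∑ e : Fin (n + 4), (Γchr A a c e x * Γchr A e d b x - Γchr A a d e x * Γchr A e c b x)

/-- Auxiliary recursion for iterated covariant derivatives of the curvature; the list of
differentiation indices is stored in *reverse* order (most recent derivative first). -/
def covRAux (A : Fin N → Matrix (Fin n) (Fin n) ℝ) :
    Fin (n + 4) → Fin (n + 4) → Fin (n + 4) → Fin (n + 4) → List (Fin (n + 4)) → Pt n → ℝ
  | a, b, c, d, [], x => Rcurv A a b c d x
  | a, b, c, d, f :: fs, x =>
      pd f (covRAux A a b c d fs) x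
      + ∑ l : Fin (n + 4), Γchr A a f l x * covRAux A l b c d fs x
      - ∑ l : Fin (n + 4), Γchr A l f b x * covRAux A a l c d fs x
      - ∑ l : Fin (n + 4), Γchr A l f c x * covRAux A a b l d fs x
      - ∑ l : Fin (n + 4), Γchr A l f d x * covRAux A a b c l fs x
      - ∑ s : Fin fs.length, ∑ l : Fin (n + 4),
          Γchr A l f (fs.get s) x * covRAux A a b c d (fs.set s l) x
  termination_by a b c d fs => fs.length
  decreasing_by all_goals simp [List.length_set]

/-- `covR A a b c d [f_1, …, f_r] x` is the component `R^a_{b,c,d;f_1;…;f_r}(x)` of the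
`r`-th covariant derivative of the curvature tensor (indices in natural order). -/
def covR (A : Fin N → Matrix (Fin n) (Fin n) ℝ) (a b c d : Fin (n + 4))
    (fs : List (Fin (n + 4))) (x : Pt n) : ℝ :=
  covRAux A a b c d fs.reverse x



/-! ### Index taxonomy and weights -/

def isE (a : Fin (n + 4)) : Prop := 2 ≤ a.1 ∧ a.1 < n + 2

instance : DecidablePred (isE (n := n)) := fun _ => instDecidableAnd

def keep (a : Fin (n + 4)) : Prop := isE a ∨ a = q1 n

instance : DecidablePred (keep (n := n)) := fun _ => instDecidableOr

/-- The weight of an index: `-1` on `p1,p2`, `0` on `ehat i`, `1` on `q1,q2`. -/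
def ν (a : Fin (n + 4)) : ℤ := if a.1 < 2 then -1 else if a.1 < n + 2 then 0 else 1

def notP (a : Fin (n + 4)) : Prop := a ≠ p1 n ∧ a ≠ p2 n

@[simp] lemma p1_ne_p2 : (p1 n) ≠ p2 n := by simp [p1, p2, Fin.ext_iff]
@[simp] lemma p1_ne_q1 : (p1 n) ≠ q1 n := by simp [p1, q1, Fin.ext_iff]
@[simp] lemma p1_ne_q2 : (p1 n) ≠ q2 n := by simp [p1, q2, Fin.ext_iff]
@[simp] lemma p2_ne_q1 : (p2 n) ≠ q1 n := by simp [p2, q1, Fin.ext_iff]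
@[simp] lemma p2_ne_q2 : (p2 n) ≠ q2 n := by simp [p2, q2, Fin.ext_iff]
@[simp] lemma q1_ne_q2 : (q1 n) ≠ q2 n := by simp [q1, q2, Fin.ext_iff]
@[simp] lemma p2_ne_p1 : (p2 n) ≠ p1 n := by simp [p1, p2, Fin.ext_iff]
@[simp] lemma q1_ne_p1 : (q1 n) ≠ p1 n := by simp [p1, q1, Fin.ext_iff]
@[simp] lemma q2_ne_p1 : (q2 n) ≠ p1 n := by simp [p1, q2, Fin.ext_iff]
@[simp] lemma q1_ne_p2 : (q1 n) ≠ p2 n := by simp [p2, q1, Fin.ext_iff]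
@[simp] lemma q2_ne_p2 : (q2 n) ≠ p2 n := by simp [p2, q2, Fin.ext_iff]
@[simp] lemma q2_ne_q1 : (q2 n) ≠ q1 n := by simp [q1, q2, Fin.ext_iff]
@[simp] lemma ehat_ne_p1 {i : Fin n} : ehat i ≠ p1 n := by simp [ehat, p1, Fin.ext_iff]
@[simp] lemma ehat_ne_p2 {i : Fin n} : ehat i ≠ p2 n := by simp [ehat, p2, Fin.ext_iff]
@[simp] lemma ehat_ne_q1 {i : Fin n} : ehat i ≠ q1 n := by
  have := i.isLt; simp [ehat, q1, Fin.ext_iff]; omega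
@[simp] lemma ehat_ne_q2 {i : Fin n} : ehat i ≠ q2 n := by
  have := i.isLt; simp [ehat, q2, Fin.ext_iff]; omega
@[simp] lemma p1_ne_ehat {i : Fin n} : p1 n ≠ ehat i := ehat_ne_p1.symm
@[simp] lemma p2_ne_ehat {i : Fin n} : p2 n ≠ ehat i := ehat_ne_p2.symm
@[simp] lemma q1_ne_ehat {i : Fin n} : q1 n ≠ ehat i := ehat_ne_q1.symm
@[simp] lemma q2_ne_ehat {i : Fin n} : q2 n ≠ ehat i := ehat_ne_q2.symm
@[simp] lemma ehat_inj {i j : Fin n} : ehat i = ehat j ↔ i = j := by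
  simp [ehat, Fin.ext_iff]

lemma taxonomy (a : Fin (n + 4)) :
    a = p1 n ∨ a = p2 n ∨ (∃ i : Fin n, a = ehat i) ∨ a = q1 n ∨ a = q2 n := by
  rcases a with ⟨v, hv⟩
  rcases Nat.lt_or_ge v 2 with h | h
  · interval_cases v
    · exact Or.inl rfl
    · exact Or.inr (Or.inl rfl)
  rcases Nat.lt_or_ge v (n + 2) with h2 | h2
  · exact Or.inr (Or.inr (Or.inl ⟨⟨v - 2, by omega⟩, by simp [ehat, Fin.ext_iff]; omega⟩))
  rcases Nat.lt_or_ge v (n + 3) with h3 | h3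
  · exact Or.inr (Or.inr (Or.inr (Or.inl (by simp [q1, Fin.ext_iff]; omega))))
  · exact Or.inr (Or.inr (Or.inr (Or.inr (by simp [q2, Fin.ext_iff]; omega))))

@[simp] lemma ν_p1 : ν (p1 n) = -1 := by simp [ν, p1]
@[simp] lemma ν_p2 : ν (p2 n) = -1 := by simp [ν, p2]
@[simp] lemma ν_ehat {i : Fin n} : ν (ehat i) = 0 := by
  have := i.isLt
  simp only [ν, ehat]
  split_ifs <;> omega
@[simp] lemma ν_q1 : ν (q1 n) = 1 := by simp [ν, q1]
@[simp] lemma ν_q2 : ν (q2 n) = 1 := by simp [ν, q2]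

lemma ν_le_one (a : Fin (n + 4)) : ν a ≤ 1 := by
  unfold ν; split <;> [omega; (split <;> omega)]

lemma eq_q_of_ν_eq_one {a : Fin (n + 4)} (h : ν a = 1) : a = q1 n ∨ a = q2 n := by
  unfold ν at h
  split at h
  · omega
  · split at h
    · omega
    · have := a.isLt
      rcases Nat.lt_or_ge a.1 (n + 3) with h3 | h3
      · exact Or.inl (by simp [q1, Fin.ext_iff]; omega)
      · exact Or.inr (by simp [q2, Fin.ext_iff]; omega)

lemma isE_ehat {i : Fin n} : isE (ehat i) := by
  have := i.isLt; constructor <;> simp [ehat] <;> omega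
lemma keep_ehat {i : Fin n} : keep (ehat i) := Or.inl isE_ehat
lemma keep_q1 : keep (q1 n) := Or.inr rfl
@[simp] lemma not_isE_p1 : ¬ isE (p1 n) := by simp [isE, p1]
@[simp] lemma not_isE_p2 : ¬ isE (p2 n) := by simp [isE, p2]
@[simp] lemma not_isE_q1 : ¬ isE (q1 n) := by simp [isE, q1]
@[simp] lemma not_isE_q2 : ¬ isE (q2 n) := by simp [isE, q2]
@[simp] lemma not_keep_p1 : ¬ keep (p1 n) := by simp [keep]
@[simp] lemma not_keep_p2 : ¬ keep (p2 n) := by simp [keep]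
@[simp] lemma not_keep_q2 : ¬ keep (q2 n) := by simp [keep]

lemma notP_of_keep {b : Fin (n + 4)} (h : keep b) : notP b := by
  constructor <;> rintro rfl <;> simp at h

lemma notP_cases {b : Fin (n + 4)} (h : notP b) : keep b ∨ b = q2 n := by
  rcases taxonomy b with rfl | rfl | ⟨i, rfl⟩ | rfl | rfl
  · exact absurd rfl h.1
  · exact absurd rfl h.2
  · exact Or.inl keep_ehat
  · exact Or.inl keep_q1
  · exact Or.inr rfl

/-- For `b ∉ {p1,p2}`, `[b ∈ E] = 1 - ν b`. -/
lemma eE_eq {b : Fin (n + 4)} (h : notP b) : (if isE b then (1 : ℤ) else 0) = 1 - ν b := by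
  rcases taxonomy b with rfl | rfl | ⟨i, rfl⟩ | rfl | rfl
  · exact absurd rfl h.1
  · exact absurd rfl h.2
  · simp [isE_ehat]
  · simp
  · simp
/-! ### Scaling and projection maps -/

/-- Scale the `ehat` coordinates by `t`. -/
def scL (t : ℝ) : Pt n →L[ℝ] Pt n :=
  ContinuousLinearMap.pi fun a =>
    if isE a then t • ContinuousLinearMap.proj a else ContinuousLinearMap.proj a

/-- Project onto the coordinates `ehat i` and `q1` (zero out the others). -/
def projL : Pt n →L[ℝ] Pt n :=
  ContinuousLinearMap.pi fun a => if keep a then ContinuousLinearMap.proj a else 0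

lemma scL_apply (t : ℝ) (x : Pt n) (a : Fin (n + 4)) :
    scL t x a = if isE a then t * x a else x a := by
  simp only [scL, ContinuousLinearMap.pi_apply]
  split <;> simp

lemma projL_apply (x : Pt n) (a : Fin (n + 4)) :
    projL x a = if keep a then x a else 0 := by
  simp only [projL, ContinuousLinearMap.pi_apply]
  split <;> simp

lemma projL_idem (x : Pt n) : projL (projL (n := n) x) = projL x := by
  funext a; simp only [projL_apply]; split <;> simp

lemma scL_single (t : ℝ) (b : Fin (n + 4)) :
    scL t (Pi.single b (1 : ℝ)) = (if isE b then t else 1) • (Pi.single b (1 : ℝ) : Pt n) := by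
  funext a
  rcases eq_or_ne a b with rfl | hab
  · simp [scL_apply]
  · simp [scL_apply, Pi.single_eq_of_ne hab]

lemma projL_single_keep {b : Fin (n + 4)} (hb : keep b) :
    projL (Pi.single b (1 : ℝ)) = (Pi.single b (1 : ℝ) : Pt n) := by
  funext a
  rcases eq_or_ne a b with rfl | hab
  · simp [projL_apply, hb]
  · simp [projL_apply, Pi.single_eq_of_ne hab]

lemma projL_single_not_keep {b : Fin (n + 4)} (hb : ¬ keep b) :
    projL (Pi.single b (1 : ℝ) : Pt n) = 0 := by
  funext a
  rcases eq_or_ne a b with rfl | hab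
  · simp [projL_apply, hb]
  · simp [projL_apply, Pi.single_eq_of_ne hab]

/-! ### The class of good functions -/

/-- A function `Pt n → ℝ` is `Good k` if it is smooth, depends only on the coordinates
`ehat i`, `q1`, and is homogeneous of weighted degree `k` under scaling of the `ehat`
coordinates. -/
structure Good (k : ℤ) (f : Pt n → ℝ) : Prop where
  smooth : ContDiff ℝ (⊤ : ℕ∞) f
  factor : ∀ x, f (projL x) = f x
  scale : ∀ t : ℝ, 0 < t → ∀ x, f (scL t x) = t ^ k * f x

lemma Good.zero' {k : ℤ} {f : Pt n → ℝ} (h : ∀ x, f x = 0) : Good k f := by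
  have : f = fun _ => 0 := funext h
  subst this
  exact ⟨contDiff_const, fun _ => rfl, fun t ht x => by simp⟩

lemma Good.zero {k : ℤ} : Good k (fun _ : Pt n => (0 : ℝ)) := Good.zero' fun _ => rfl

lemma Good.const (c : ℝ) : Good (n := n) 0 (fun _ => c) :=
  ⟨contDiff_const, fun _ => rfl, fun t ht x => by simp⟩

lemma Good.add {k : ℤ} {f g : Pt n → ℝ} (hf : Good k f) (hg : Good k g) :
    Good k (fun x => f x + g x) :=
  ⟨hf.smooth.add hg.smooth, fun x => by rw [hf.factor, hg.factor],
   fun t ht x => by rw [hf.scale t ht, hg.scale t ht]; ring⟩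

lemma Good.neg {k : ℤ} {f : Pt n → ℝ} (hf : Good k f) : Good k (fun x => -f x) :=
  ⟨hf.smooth.neg, fun x => by rw [hf.factor], fun t ht x => by rw [hf.scale t ht]; ring⟩

lemma Good.sub {k : ℤ} {f g : Pt n → ℝ} (hf : Good k f) (hg : Good k g) :
    Good k (fun x => f x - g x) := by
  simpa [sub_eq_add_neg] using hf.add hg.neg

lemma Good.mul {k l : ℤ} {f g : Pt n → ℝ} (hf : Good k f) (hg : Good l g) :
    Good (k + l) (fun x => f x * g x) :=
  ⟨hf.smooth.mul hg.smooth, fun x => by rw [hf.factor, hg.factor],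
   fun t ht x => by rw [hf.scale t ht, hg.scale t ht, zpow_add₀ (ne_of_gt ht)]; ring⟩

lemma Good.const_mul {k : ℤ} {f : Pt n → ℝ} (hf : Good k f) (c : ℝ) :
    Good k (fun x => c * f x) := by
  simpa using (Good.const (n := n) c).mul hf

lemma Good.sum {k : ℤ} {ι : Type*} (s : Finset ι) {f : ι → Pt n → ℝ}
    (hf : ∀ i ∈ s, Good k (f i)) : Good k (fun x => ∑ i ∈ s, f i x) := by
  classical
  induction s using Finset.induction_on with
  | empty => simpa using Good.zero
  | insert a s hnotmem ih =>
      simp only [Finset.sum_insert hnotmem]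
      exact (hf a (Finset.mem_insert_self a s)).add
        (ih fun i hi => hf i (Finset.mem_insert_of_mem hi))

lemma Good.pow {k : ℤ} {f : Pt n → ℝ} (hf : Good k f) (m : ℕ) :
    Good (m * k) (fun x => f x ^ m) := by
  induction m with
  | zero => simpa using Good.const (n := n) 1
  | succ m ih =>
      have := ih.mul hf
      have h : (m : ℤ) * k + k = ((m + 1 : ℕ) : ℤ) * k := by push_cast; ring
      rw [h] at this
      simpa [pow_succ] using this
/-! ### Partial derivatives of good functions -/

lemma pd_zero_fn {f : Pt n → ℝ} (h : ∀ y, f y = 0) (b : Fin (n + 4)) (x : Pt n) :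
    pd b f x = 0 := by
  have : f = fun _ => 0 := funext h
  subst this
  simp [pd, fderiv_const]

lemma Good.fderiv_factor {k : ℤ} {f : Pt n → ℝ} (hf : Good k f) (x : Pt n) :
    fderiv ℝ f x = (fderiv ℝ f (projL x)).comp (projL (n := n) : Pt n →L[ℝ] Pt n) := by
  have hc : f ∘ (projL (n := n)) = f := funext hf.factor
  conv_lhs => rw [← hc]
  rw [fderiv_comp x (hf.smooth.differentiable (by simp) _) (projL.differentiableAt)]
  rw [ContinuousLinearMap.fderiv]

lemma Good.pd_not_keep {k : ℤ} {f : Pt n → ℝ} (hf : Good k f) {b : Fin (n + 4)}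
    (hb : ¬ keep b) (x : Pt n) : pd b f x = 0 := by
  rw [pd, hf.fderiv_factor x]
  simp [projL_single_not_keep hb]

lemma Good.pd_smooth {k : ℤ} {f : Pt n → ℝ} (hf : Good k f) (b : Fin (n + 4)) :
    ContDiff ℝ (⊤ : ℕ∞) (pd b f) := by
  have h1 : ContDiff ℝ (⊤ : ℕ∞) (fderiv ℝ f) := hf.smooth.fderiv_right (mod_cast le_top)
  exact h1.clm_apply contDiff_const

lemma Good.pd_keep {k : ℤ} {f : Pt n → ℝ} (hf : Good k f) {b : Fin (n + 4)} (hb : keep b) :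
    Good (k + ν b - 1) (pd b f) := by
  have hdiff : ∀ y, DifferentiableAt ℝ f y := fun y => hf.smooth.differentiable (by simp) y
  refine ⟨hf.pd_smooth b, ?_, ?_⟩
  · intro x
    have h1 : pd b f x = fderiv ℝ f (projL x) (Pi.single b 1) := by
      rw [pd, hf.fderiv_factor x]
      simp [ContinuousLinearMap.comp_apply, projL_single_keep hb]
    rw [h1, pd]
  · intro t ht x
    have hco : f ∘ (scL (n := n) t) = fun y => t ^ k * f y := funext (hf.scale t ht)
    have h2 : fderiv ℝ (f ∘ (scL (n := n) t)) x
        = (fderiv ℝ f (scL t x)).comp (scL (n := n) t : Pt n →L[ℝ] Pt n) := by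
      rw [fderiv_comp x (hdiff _) ((scL t).differentiableAt), ContinuousLinearMap.fderiv]
    have h3 : fderiv ℝ (fun y => t ^ k * f y) x = t ^ k • fderiv ℝ f x :=
      fderiv_const_mul (hdiff x) _
    have h4 : (fderiv ℝ f (scL t x)).comp (scL (n := n) t : Pt n →L[ℝ] Pt n)
        = t ^ k • fderiv ℝ f x := by rw [← h2, hco, h3]
    have h5 : fderiv ℝ f (scL t x) (scL t (Pi.single b 1))
        = t ^ k * fderiv ℝ f x (Pi.single b 1) := by
      have := congrArg (fun (L : Pt n →L[ℝ] ℝ) => L (Pi.single b 1)) h4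
      simpa using this
    rw [scL_single, _root_.map_smul, smul_eq_mul] at h5
    have ht0 : (t : ℝ) ≠ 0 := ne_of_gt ht
    have heE : (if isE b then (1:ℤ) else 0) = 1 - ν b := eE_eq (notP_of_keep hb)
    show pd b f (scL t x) = t ^ (k + ν b - 1) * pd b f x
    by_cases hE : isE b
    · rw [if_pos hE] at h5
      have hν : ν b = 0 := by rw [if_pos hE] at heE; omega
      rw [pd, pd]
      have : fderiv ℝ f (scL t x) (Pi.single b 1)
          = t⁻¹ * (t ^ k * fderiv ℝ f x (Pi.single b 1)) := by
        field_simp at h5 ⊢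
        linarith [h5]
      rw [this, hν]
      rw [show k + 0 - 1 = k + (-1) by ring, zpow_add₀ ht0, _root_.zpow_neg_one]
      ring
    · rw [if_neg hE, one_mul] at h5
      have hν : ν b = 1 := by rw [if_neg hE] at heE; omega
      rw [pd, pd, h5, hν]
      norm_num
/-! ### Goodness of the metric coefficients -/

lemma good_coord_keep {a : Fin (n + 4)} (ha : keep a) (hν : isE a → (1 : ℤ) = 1) :
    True := trivial

lemma good_coord_ehat (i : Fin n) : Good (n := n) 1 (fun x => x (ehat i)) := by
  refine ⟨?_, ?_, ?_⟩
  · exact (ContinuousLinearMap.proj (R := ℝ) (φ := fun _ : Fin (n+4) => ℝ) (ehat i)).contDiff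
  · intro x; simp [projL_apply, keep_ehat]
  · intro t ht x; simp [scL_apply, isE_ehat]

lemma good_coord_q1 : Good (n := n) 0 (fun x => x (q1 n)) := by
  refine ⟨?_, ?_, ?_⟩
  · exact (ContinuousLinearMap.proj (R := ℝ) (φ := fun _ : Fin (n+4) => ℝ) (q1 n)).contDiff
  · intro x; simp [projL_apply, keep_q1]
  · intro t ht x; simp [scL_apply]

lemma good_u (A : Fin N → Matrix (Fin n) (Fin n) ℝ) (i : Fin n) :
    Good (n := n) 1 (u A i) := by
  have : u A i = fun x => ∑ j : Fin n, ∑ α : Fin N,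
      A α i j * (x (ehat j) * x (q1 n) ^ (α.1 + 1)) := by
    funext x; simp [u, mul_assoc]
  rw [this]
  refine Good.sum _ fun j _ => Good.sum _ fun α _ => ?_
  have h1 : Good (n := n) 1 (fun x => x (ehat j) * x (q1 n) ^ (α.1 + 1)) := by
    have h2 := (good_coord_ehat j).mul ((good_coord_q1 (n := n)).pow (α.1 + 1))
    simpa using h2
  exact h1.const_mul _

lemma good_Fq : Good (n := n) 2 (Fq n) := by
  have : Fq n = fun x => ∑ i : Fin n, x (ehat i) ^ 2 := by funext x; simp [Fq]
  rw [this]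
  refine Good.sum _ fun i _ => ?_
  have h2 := (good_coord_ehat (n := n) i).pow 2
  simpa using h2

/-- Entry `(a,b)` of the metric is good of weight `ν a + ν b`. -/
lemma good_Gmet (A : Fin N → Matrix (Fin n) (Fin n) ℝ) (a b : Fin (n + 4)) :
    Good (ν a + ν b) (fun y => Gmet A y a b) := by
  unfold Gmet
  refine ((((Good.add ?_ ?_).add ?_).add ?_).add ?_)
  · by_cases h : (a = p1 n ∧ b = q1 n) ∨ (a = q1 n ∧ b = p1 n)
    · simp only [if_pos h]
      rcases h with ⟨rfl, rfl⟩ | ⟨rfl, rfl⟩ <;> simpa using Good.const (n := n) 1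
    · simp only [if_neg h]; exact Good.zero
  · by_cases h : (a = p2 n ∧ b = q2 n) ∨ (a = q2 n ∧ b = p2 n)
    · simp only [if_pos h]
      rcases h with ⟨rfl, rfl⟩ | ⟨rfl, rfl⟩ <;> simpa using Good.const (n := n) 1
    · simp only [if_neg h]; exact Good.zero
  · refine Good.sum _ fun i _ => ?_
    by_cases h : a = ehat i ∧ b = ehat i
    · simp only [if_pos h]
      rcases h with ⟨rfl, rfl⟩
      simpa using Good.const (n := n) 1
    · simp only [if_neg h]; exact Good.zero
  · refine Good.sum _ fun i _ => ?_
    by_cases h : (a = ehat i ∧ b = q2 n) ∨ (a = q2 n ∧ b = ehat i)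
    · simp only [if_pos h]
      rcases h with ⟨rfl, rfl⟩ | ⟨rfl, rfl⟩ <;> simpa using good_u A i
    · simp only [if_neg h]; exact Good.zero
  · by_cases h : (a = q1 n ∧ b = q1 n) ∨ (a = q2 n ∧ b = q2 n)
    · simp only [if_pos h]
      rcases h with ⟨rfl, rfl⟩ | ⟨rfl, rfl⟩ <;> simpa using good_Fq (n := n)
    · simp only [if_neg h]; exact Good.zero


lemma sum_ite_and_eq {β : Type*} [AddCommMonoid β] (i : Fin n) (P : Fin n → Prop)
    [DecidablePred P] (g : Fin n → β) :
    (∑ j : Fin n, if i = j ∧ P j then g j else 0) = if P i then g i else 0 := by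
  rw [Finset.sum_eq_single i]
  · by_cases h : P i <;> simp [h]
  · intro j _ hj
    rw [if_neg]
    rintro ⟨rfl, -⟩
    exact hj rfl
  · simp

/-! ### Row descriptions of the metric -/

lemma Gmet_row_p1 (A : Fin N → Matrix (Fin n) (Fin n) ℝ) (x : Pt n) (d : Fin (n + 4)) :
    Gmet A x (p1 n) d = if d = q1 n then 1 else 0 := by
  simp [Gmet]

lemma Gmet_row_p2 (A : Fin N → Matrix (Fin n) (Fin n) ℝ) (x : Pt n) (d : Fin (n + 4)) :
    Gmet A x (p2 n) d = if d = q2 n then 1 else 0 := by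
  simp [Gmet]

lemma Gmet_row_ehat (A : Fin N → Matrix (Fin n) (Fin n) ℝ) (x : Pt n) (i : Fin n)
    (d : Fin (n + 4)) :
    Gmet A x (ehat i) d = (if d = ehat i then 1 else 0) + (if d = q2 n then u A i x else 0) := by
  simp only [Gmet, ehat_ne_p1, ehat_ne_p2, ehat_ne_q1, ehat_ne_q2, false_and, or_false,
    false_or, if_false, ehat_inj]
  rw [sum_ite_and_eq i (fun j => d = ehat j) (fun _ => (1:ℝ)),
    sum_ite_and_eq i (fun _ => d = q2 n) (fun j => u A j x)]
  simp
lemma Gmet_row_q1 (A : Fin N → Matrix (Fin n) (Fin n) ℝ) (x : Pt n) (d : Fin (n + 4)) :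
    Gmet A x (q1 n) d = (if d = p1 n then 1 else 0) + (if d = q1 n then Fq n x else 0) := by
  simp [Gmet]

lemma Gmet_row_q2 (A : Fin N → Matrix (Fin n) (Fin n) ℝ) (x : Pt n) (d : Fin (n + 4)) :
    Gmet A x (q2 n) d = (if d = p2 n then 1 else 0)
      + (∑ j : Fin n, if d = ehat j then u A j x else 0)
      + (if d = q2 n then Fq n x else 0) := by
  simp [Gmet]

lemma Gmet_col_p1 (A : Fin N → Matrix (Fin n) (Fin n) ℝ) (x : Pt n) (d : Fin (n + 4)) :
    Gmet A x d (p1 n) = if d = q1 n then 1 else 0 := by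
  simp [Gmet]

lemma Gmet_col_p2 (A : Fin N → Matrix (Fin n) (Fin n) ℝ) (x : Pt n) (d : Fin (n + 4)) :
    Gmet A x d (p2 n) = if d = q2 n then 1 else 0 := by
  simp [Gmet]

/-! ### The explicit inverse of the metric -/

def Ginv (A : Fin N → Matrix (Fin n) (Fin n) ℝ) (x : Pt n) :
    Matrix (Fin (n + 4)) (Fin (n + 4)) ℝ := fun a b =>
  (if (a = p1 n ∧ b = q1 n) ∨ (a = q1 n ∧ b = p1 n) then (1 : ℝ) else 0)
  + (if (a = p2 n ∧ b = q2 n) ∨ (a = q2 n ∧ b = p2 n) then (1 : ℝ) else 0)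
  + (∑ i : Fin n, if a = ehat i ∧ b = ehat i then (1 : ℝ) else 0)
  - (∑ i : Fin n, if (a = ehat i ∧ b = p2 n) ∨ (a = p2 n ∧ b = ehat i) then u A i x else 0)
  - (if a = p1 n ∧ b = p1 n then Fq n x else 0)
  + (if a = p2 n ∧ b = p2 n then (∑ i : Fin n, (u A i x) ^ 2) - Fq n x else 0)

lemma Ginv_row_p1 (A : Fin N → Matrix (Fin n) (Fin n) ℝ) (x : Pt n) (b : Fin (n + 4)) :
    Ginv A x (p1 n) b = (if b = q1 n then 1 else 0) - (if b = p1 n then Fq n x else 0) := by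
  simp [Ginv]

lemma Ginv_row_p2 (A : Fin N → Matrix (Fin n) (Fin n) ℝ) (x : Pt n) (b : Fin (n + 4)) :
    Ginv A x (p2 n) b = (if b = q2 n then 1 else 0)
      - (∑ i : Fin n, if b = ehat i then u A i x else 0)
      + (if b = p2 n then (∑ i : Fin n, (u A i x) ^ 2) - Fq n x else 0) := by
  simp [Ginv]

lemma Ginv_row_ehat (A : Fin N → Matrix (Fin n) (Fin n) ℝ) (x : Pt n) (i : Fin n)
    (b : Fin (n + 4)) :
    Ginv A x (ehat i) b = (if b = ehat i then 1 else 0) - (if b = p2 n then u A i x else 0) := by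
  simp only [Ginv, ehat_ne_p1, ehat_ne_p2, ehat_ne_q1, ehat_ne_q2, false_and, and_false,
    false_or, or_false, if_false, ehat_inj]
  rw [sum_ite_and_eq i (fun j => b = ehat j) (fun _ => (1:ℝ)),
    sum_ite_and_eq i (fun _ => b = p2 n) (fun j => u A j x)]
  simp

lemma Ginv_row_q1 (A : Fin N → Matrix (Fin n) (Fin n) ℝ) (x : Pt n) (b : Fin (n + 4)) :
    Ginv A x (q1 n) b = if b = p1 n then 1 else 0 := by
  simp [Ginv]

lemma Ginv_row_q2 (A : Fin N → Matrix (Fin n) (Fin n) ℝ) (x : Pt n) (b : Fin (n + 4)) :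
    Ginv A x (q2 n) b = if b = p2 n then 1 else 0 := by
  simp [Ginv]

lemma sum_delta_mul (c : Fin (n + 4)) (v : ℝ) (g : Fin (n + 4) → ℝ) :
    (∑ d : Fin (n + 4), (if d = c then v else 0) * g d) = v * g c := by
  rw [Finset.sum_eq_single c]
  · simp
  · intro d _ hd; simp [hd]
  · simp

lemma Gmet_mul_Ginv (A : Fin N → Matrix (Fin n) (Fin n) ℝ) (x : Pt n) :
    Gmet A x * Ginv A x = 1 := by
  ext a b
  rw [Matrix.mul_apply, Matrix.one_apply]
  rcases taxonomy a with rfl | rfl | ⟨i, rfl⟩ | rfl | rfl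
  · rw [Finset.sum_congr rfl fun d _ => by rw [Gmet_row_p1]]
    rw [sum_delta_mul (q1 n) 1 (fun d => Ginv A x d b), Ginv_row_q1]
    rcases taxonomy b with rfl | rfl | ⟨j, rfl⟩ | rfl | rfl <;> simp
  · rw [Finset.sum_congr rfl fun d _ => by rw [Gmet_row_p2]]
    rw [sum_delta_mul (q2 n) 1 (fun d => Ginv A x d b), Ginv_row_q2]
    rcases taxonomy b with rfl | rfl | ⟨j, rfl⟩ | rfl | rfl <;> simp
  · rw [Finset.sum_congr rfl fun d _ => by rw [Gmet_row_ehat, add_mul]]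
    rw [Finset.sum_add_distrib,
      sum_delta_mul (ehat i) 1 (fun d => Ginv A x d b),
      sum_delta_mul (q2 n) (u A i x) (fun d => Ginv A x d b),
      Ginv_row_ehat, Ginv_row_q2]
    rcases taxonomy b with rfl | rfl | ⟨j, rfl⟩ | rfl | rfl <;>
      simp [ehat_inj, eq_comm (a := i)]
  · rw [Finset.sum_congr rfl fun d _ => by rw [Gmet_row_q1, add_mul]]
    rw [Finset.sum_add_distrib,
      sum_delta_mul (p1 n) 1 (fun d => Ginv A x d b),
      sum_delta_mul (q1 n) (Fq n x) (fun d => Ginv A x d b),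
      Ginv_row_p1, Ginv_row_q1]
    rcases taxonomy b with rfl | rfl | ⟨j, rfl⟩ | rfl | rfl <;> simp
  · rw [Finset.sum_congr rfl fun d _ => by rw [Gmet_row_q2, add_mul, add_mul]]
    have hmid : (∑ d : Fin (n + 4), (∑ j : Fin n, if d = ehat j then u A j x else 0)
        * Ginv A x d b) = ∑ j : Fin n, u A j x * Ginv A x (ehat j) b := by
      rw [Finset.sum_congr rfl fun d _ => by rw [Finset.sum_mul]]
      rw [Finset.sum_comm]
      exact Finset.sum_congr rfl fun j _ =>
        sum_delta_mul (ehat j) (u A j x) (fun d => Ginv A x d b)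
    rw [Finset.sum_add_distrib, Finset.sum_add_distrib,
      sum_delta_mul (p2 n) 1 (fun d => Ginv A x d b),
      sum_delta_mul (q2 n) (Fq n x) (fun d => Ginv A x d b),
      hmid, Ginv_row_p2, Ginv_row_q2]
    simp only [Ginv_row_ehat]
    rcases taxonomy b with rfl | rfl | ⟨j, rfl⟩ | rfl | rfl
    · simp
    · simp [mul_sub, Finset.sum_sub_distrib, sq]; ring
    · simp [ehat_inj, eq_comm (a := j)]
    · simp
    · simp
lemma Gmet_inv_eq (A : Fin N → Matrix (Fin n) (Fin n) ℝ) (x : Pt n) :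
    (Gmet A x)⁻¹ = Ginv A x :=
  Matrix.inv_eq_right_inv (Gmet_mul_Ginv A x)

/-- Entry `(a,b)` of the inverse metric is good of weight `-ν a - ν b`. -/
lemma good_Ginv (A : Fin N → Matrix (Fin n) (Fin n) ℝ) (a b : Fin (n + 4)) :
    Good (-ν a - ν b) (fun y => Ginv A y a b) := by
  unfold Ginv
  refine ((((Good.add ?_ ?_).add ?_).sub ?_).sub ?_).add ?_
  · by_cases h : (a = p1 n ∧ b = q1 n) ∨ (a = q1 n ∧ b = p1 n)
    · simp only [if_pos h]
      rcases h with ⟨rfl, rfl⟩ | ⟨rfl, rfl⟩ <;> simpa using Good.const (n := n) 1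
    · simp only [if_neg h]; exact Good.zero
  · by_cases h : (a = p2 n ∧ b = q2 n) ∨ (a = q2 n ∧ b = p2 n)
    · simp only [if_pos h]
      rcases h with ⟨rfl, rfl⟩ | ⟨rfl, rfl⟩ <;> simpa using Good.const (n := n) 1
    · simp only [if_neg h]; exact Good.zero
  · refine Good.sum _ fun i _ => ?_
    by_cases h : a = ehat i ∧ b = ehat i
    · simp only [if_pos h]
      rcases h with ⟨rfl, rfl⟩
      simpa using Good.const (n := n) 1
    · simp only [if_neg h]; exact Good.zero
  · refine Good.sum _ fun i _ => ?_
    by_cases h : (a = ehat i ∧ b = p2 n) ∨ (a = p2 n ∧ b = ehat i)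
    · simp only [if_pos h]
      rcases h with ⟨rfl, rfl⟩ | ⟨rfl, rfl⟩ <;> simpa using good_u A i
    · simp only [if_neg h]; exact Good.zero
  · by_cases h : a = p1 n ∧ b = p1 n
    · simp only [if_pos h]
      rcases h with ⟨rfl, rfl⟩
      simpa using good_Fq (n := n)
    · simp only [if_neg h]; exact Good.zero
  · by_cases h : a = p2 n ∧ b = p2 n
    · simp only [if_pos h]
      rcases h with ⟨rfl, rfl⟩
      have h1 : Good (n := n) 2 (fun y => (∑ i : Fin n, (u A i y) ^ 2) - Fq n y) := by
        refine Good.sub ?_ good_Fq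
        refine Good.sum _ fun i _ => ?_
        simpa using (good_u A i).pow 2
      simpa using h1
    · simp only [if_neg h]; exact Good.zero

lemma Good.of_eq {k l : ℤ} {f : Pt n → ℝ} (h : Good k f) (hk : k = l) : Good l f :=
  hk ▸ h

lemma pd_const (b : Fin (n + 4)) (c : ℝ) (x : Pt n) : pd b (fun _ => c) x = 0 := by
  simp [pd, fderiv_const]

/-- Christoffel symbols vanish if one of the lower indices is `p1` or `p2`. -/
lemma Γchr_lowP (A : Fin N → Matrix (Fin n) (Fin n) ℝ) {b c : Fin (n + 4)}
    (h : ¬ notP b ∨ ¬ notP c) (a : Fin (n + 4)) (x : Pt n) :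
    Γchr A a b c x = 0 := by
  have hP : ∀ e : Fin (n + 4), ¬ notP e →
      (∀ y d, Gmet A y e d = Gmet A ((fun _ => 0) : Pt n) e d)
      ∧ (∀ y d, Gmet A y d e = Gmet A ((fun _ => 0) : Pt n) d e) ∧ ¬ keep e := by
    intro e he
    have : e = p1 n ∨ e = p2 n := by
      by_contra hc
      push_neg at hc
      exact he ⟨hc.1, hc.2⟩
    rcases this with rfl | rfl
    · exact ⟨fun y d => by rw [Gmet_row_p1, Gmet_row_p1],
        fun y d => by rw [Gmet_col_p1, Gmet_col_p1], not_keep_p1⟩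
    · exact ⟨fun y d => by rw [Gmet_row_p2, Gmet_row_p2],
        fun y d => by rw [Gmet_col_p2, Gmet_col_p2], not_keep_p2⟩
  unfold Γchr
  rw [Finset.sum_congr rfl (fun d _ => ?_), Finset.sum_const_zero, mul_zero]
  rcases h with hb | hc
  · obtain ⟨hrow, hcol, hkeep⟩ := hP b hb
    have e1 : pd b (fun y => Gmet A y d c) x = 0 :=
      (good_Gmet A d c).pd_not_keep hkeep x
    have e2 : pd c (fun y => Gmet A y b d) x = 0 := by
      have : (fun y => Gmet A y b d) = fun _ => Gmet A ((fun _ => 0) : Pt n) b d :=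
        funext fun y => hrow y d
      rw [this, pd_const]
    have e3 : pd d (fun y => Gmet A y b c) x = 0 := by
      have : (fun y => Gmet A y b c) = fun _ => Gmet A ((fun _ => 0) : Pt n) b c :=
        funext fun y => hrow y c
      rw [this, pd_const]
    rw [e1, e2, e3]; ring
  · obtain ⟨hrow, hcol, hkeep⟩ := hP c hc
    have e1 : pd b (fun y => Gmet A y d c) x = 0 := by
      have : (fun y => Gmet A y d c) = fun _ => Gmet A ((fun _ => 0) : Pt n) d c :=
        funext fun y => hcol y d
      rw [this, pd_const]
    have e2 : pd c (fun y => Gmet A y b d) x = 0 :=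
      (good_Gmet A b d).pd_not_keep hkeep x
    have e3 : pd d (fun y => Gmet A y b c) x = 0 := by
      have : (fun y => Gmet A y b c) = fun _ => Gmet A ((fun _ => 0) : Pt n) b c :=
        funext fun y => hcol y b
      rw [this, pd_const]
    rw [e1, e2, e3]; ring

/-- The Christoffel symbols are good of weight `ν b + ν c - ν a - 1` when the lower indices
avoid `p1, p2`. -/
lemma good_Γchr (A : Fin N → Matrix (Fin n) (Fin n) ℝ) {b c : Fin (n + 4)}
    (hb : notP b) (hc : notP c) (a : Fin (n + 4)) :
    Good (ν b + ν c - ν a - 1) (Γchr A a b c) := by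
  have hΓ : Γchr A a b c = fun x => (1 / 2) * ∑ d : Fin (n + 4), Ginv A x a d *
      (pd b (fun y => Gmet A y d c) x + pd c (fun y => Gmet A y b d) x
        - pd d (fun y => Gmet A y b c) x) := by
    funext x
    unfold Γchr
    rw [Gmet_inv_eq]
  rw [hΓ]
  refine Good.const_mul ?_ _
  refine Good.sum _ fun d _ => ?_
  have h1 : Good (ν d + ν c + ν b - 1) (pd b (fun y => Gmet A y d c)) := by
    rcases notP_cases hb with hk | rfl
    · exact Good.of_eq ((good_Gmet A d c).pd_keep hk) (by ring)
    · exact Good.zero' fun x => (good_Gmet A d c).pd_not_keep not_keep_q2 x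
  have h2 : Good (ν d + ν c + ν b - 1) (pd c (fun y => Gmet A y b d)) := by
    rcases notP_cases hc with hk | rfl
    · exact Good.of_eq ((good_Gmet A b d).pd_keep hk) (by ring)
    · exact Good.zero' fun x => (good_Gmet A b d).pd_not_keep not_keep_q2 x
  have h3 : Good (ν d + ν c + ν b - 1) (pd d (fun y => Gmet A y b c)) := by
    by_cases hd : keep d
    · exact Good.of_eq ((good_Gmet A b c).pd_keep hd) (by ring)
    · exact Good.zero' fun x => (good_Gmet A b c).pd_not_keep hd x
  exact Good.of_eq ((good_Ginv A a d).mul ((h1.add h2).sub h3)) (by ring)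
lemma not_keep_of_P {e : Fin (n + 4)} (h : ¬ notP e) : ¬ keep e := by
  have : e = p1 n ∨ e = p2 n := by
    by_contra hc; push_neg at hc; exact h ⟨hc.1, hc.2⟩
  rcases this with rfl | rfl <;> simp

/-- Curvature components vanish if one of the lower indices is `p1` or `p2`. -/
lemma Rcurv_lowP (A : Fin N → Matrix (Fin n) (Fin n) ℝ) {a b c d : Fin (n + 4)}
    (h : ¬ notP b ∨ ¬ notP c ∨ ¬ notP d) (x : Pt n) : Rcurv A a b c d x = 0 := by
  unfold Rcurv
  rcases h with hb | hc | hd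
  · rw [pd_zero_fn (Γchr_lowP A (Or.inr hb) a) c x,
      pd_zero_fn (Γchr_lowP A (Or.inr hb) a) d x]
    rw [Finset.sum_congr rfl fun e _ => by
      rw [Γchr_lowP A (Or.inr hb) e x, Γchr_lowP A (Or.inr hb) e x, mul_zero, mul_zero]]
    simp
  · have h1 : pd c (Γchr A a d b) x = 0 := by
      by_cases hdb : notP d ∧ notP b
      · exact (good_Γchr A hdb.1 hdb.2 a).pd_not_keep (not_keep_of_P hc) x
      · refine pd_zero_fn (fun y => ?_) c x
        rcases not_and_or.mp hdb with h' | h'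
        · exact Γchr_lowP A (Or.inl h') a y
        · exact Γchr_lowP A (Or.inr h') a y
    rw [h1, pd_zero_fn (Γchr_lowP A (Or.inl hc) a) d x]
    rw [Finset.sum_congr rfl fun e _ => by
      rw [Γchr_lowP A (Or.inl hc) a x, Γchr_lowP A (Or.inl hc) e x, zero_mul, mul_zero]]
    simp
  · have h1 : pd d (Γchr A a c b) x = 0 := by
      by_cases hcb : notP c ∧ notP b
      · exact (good_Γchr A hcb.1 hcb.2 a).pd_not_keep (not_keep_of_P hd) x
      · refine pd_zero_fn (fun y => ?_) d x
        rcases not_and_or.mp hcb with h' | h'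
        · exact Γchr_lowP A (Or.inl h') a y
        · exact Γchr_lowP A (Or.inr h') a y
    rw [h1, pd_zero_fn (Γchr_lowP A (Or.inl hd) a) c x]
    rw [Finset.sum_congr rfl fun e _ => by
      rw [Γchr_lowP A (Or.inl hd) a x, Γchr_lowP A (Or.inl hd) e x, mul_zero, zero_mul]]
    simp

lemma good_Rcurv (A : Fin N → Matrix (Fin n) (Fin n) ℝ) {a b c d : Fin (n + 4)}
    (hb : notP b) (hc : notP c) (hd : notP d) :
    Good (ν b + ν c + ν d - ν a - 2) (Rcurv A a b c d) := by
  have hR : Rcurv A a b c d = fun x => pd c (Γchr A a d b) x - pd d (Γchr A a c b) x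
      + ∑ e : Fin (n + 4),
        (Γchr A a c e x * Γchr A e d b x - Γchr A a d e x * Γchr A e c b x) := rfl
  rw [hR]
  refine Good.add (Good.sub ?_ ?_) (Good.sum _ fun e _ => ?_)
  · rcases notP_cases hc with hk | rfl
    · exact Good.of_eq ((good_Γchr A hd hb a).pd_keep hk) (by ring)
    · exact Good.zero' fun x => (good_Γchr A hd hb a).pd_not_keep not_keep_q2 x
  · rcases notP_cases hd with hk | rfl
    · exact Good.of_eq ((good_Γchr A hc hb a).pd_keep hk) (by ring)
    · exact Good.zero' fun x => (good_Γchr A hc hb a).pd_not_keep not_keep_q2 x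
  · by_cases he : notP e
    · exact Good.of_eq (((good_Γchr A hc he a).mul (good_Γchr A hd hb e)).sub
        (Good.of_eq ((good_Γchr A hd he a).mul (good_Γchr A hc hb e)) (by ring))) (by ring)
    · refine Good.zero' fun x => ?_
      rw [Γchr_lowP A (Or.inr he) a x, Γchr_lowP A (Or.inr he) a x]
      ring

lemma Rcurv_antisymm (A : Fin N → Matrix (Fin n) (Fin n) ℝ) (a b c d : Fin (n + 4))
    (x : Pt n) : Rcurv A a b c d x = - Rcurv A a b d c x := by
  unfold Rcurv
  rw [show (∑ e : Fin (n + 4),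
      (Γchr A a d e x * Γchr A e c b x - Γchr A a c e x * Γchr A e d b x))
      = - ∑ e : Fin (n + 4),
      (Γchr A a c e x * Γchr A e d b x - Γchr A a d e x * Γchr A e c b x) by
    rw [← Finset.sum_neg_distrib]
    exact Finset.sum_congr rfl fun e _ => by ring]
  ring
lemma pd_neg (b : Fin (n + 4)) (g : Pt n → ℝ) (x : Pt n) :
    pd b (fun y => -g y) x = - pd b g x := by
  simp [pd, fderiv_neg]

lemma map_sum_set (g : Fin (n + 4) → ℤ) :
    ∀ (fs : List (Fin (n + 4))) (s : Fin fs.length) (l : Fin (n + 4)),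
      ((fs.set s l).map g).sum = (fs.map g).sum - g (fs.get s) + g l := by
  intro fs
  induction fs with
  | nil => exact fun s => absurd s.isLt (by simp)
  | cons f fs ih =>
      intro s l
      rcases s with ⟨sv, hs⟩
      cases sv with
      | zero => simp [List.set]; ring
      | succ sv =>
          have hs' : sv < fs.length := by simpa using hs
          have h2 := ih ⟨sv, hs'⟩ l
          simp only [List.set, List.map_cons, List.sum_cons, Fin.val_mk, List.get_eq_getElem,
            List.getElem_cons_succ] at h2 ⊢
          omega

lemma covRAux_main (A : Fin N → Matrix (Fin n) (Fin n) ℝ) :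
    ∀ (m : ℕ) (fs : List (Fin (n + 4))), fs.length = m → ∀ (a b c d : Fin (n + 4)),
      ((¬ notP b ∨ ¬ notP c ∨ ¬ notP d) → ∀ x, covRAux A a b c d fs x = 0)
      ∧ (notP b → notP c → notP d →
          Good (ν b + ν c + ν d - ν a - 2 + ((fs.map fun f => ν f - 1).sum))
            (covRAux A a b c d fs))
      ∧ (∀ x, covRAux A a b c d fs x = - covRAux A a b d c fs x) := by
  intro m
  induction m using Nat.strong_induction_on with
  | _ m IH =>
  intro fs hlen a b c d
  cases fs with
  | nil =>
      refine ⟨fun h x => by rw [covRAux]; exact Rcurv_lowP A h x, fun hb hc hd => ?_,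
        fun x => by rw [covRAux, covRAux]; exact Rcurv_antisymm A a b c d x⟩
      have hfun : covRAux A a b c d [] = Rcurv A a b c d := funext fun x => by rw [covRAux]
      rw [hfun]
      simpa using good_Rcurv A hb hc hd
  | cons f fs =>
      have hlen' : fs.length < m := by simp at hlen; omega
      have IHfs := fun (a b c d : Fin (n + 4)) => IH fs.length hlen' fs rfl a b c d
      have IHset := fun (s : Fin fs.length) (l : Fin (n + 4)) (a b c d : Fin (n + 4)) =>
        IH fs.length hlen' (fs.set s l) (by simp [List.length_set]) a b c d
      refine ⟨?_, ?_, ?_⟩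
      -- vanishing when a lower slot is p1 or p2
      · intro h x
        rw [covRAux]
        rw [pd_zero_fn ((IHfs a b c d).1 h) f x]
        have z1 : (∑ l : Fin (n + 4), Γchr A a f l x * covRAux A l b c d fs x) = 0 :=
          Finset.sum_eq_zero fun l _ => by rw [(IHfs l b c d).1 h x, mul_zero]
        have z2 : (∑ l : Fin (n + 4), Γchr A l f b x * covRAux A a l c d fs x) = 0 := by
          rcases h with hb | hc | hd
          · exact Finset.sum_eq_zero fun l _ => by rw [Γchr_lowP A (Or.inr hb) l x, zero_mul]
          · exact Finset.sum_eq_zero fun l _ => by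
              rw [(IHfs a l c d).1 (Or.inr (Or.inl hc)) x, mul_zero]
          · exact Finset.sum_eq_zero fun l _ => by
              rw [(IHfs a l c d).1 (Or.inr (Or.inr hd)) x, mul_zero]
        have z3 : (∑ l : Fin (n + 4), Γchr A l f c x * covRAux A a b l d fs x) = 0 := by
          rcases h with hb | hc | hd
          · exact Finset.sum_eq_zero fun l _ => by
              rw [(IHfs a b l d).1 (Or.inl hb) x, mul_zero]
          · exact Finset.sum_eq_zero fun l _ => by rw [Γchr_lowP A (Or.inr hc) l x, zero_mul]
          · exact Finset.sum_eq_zero fun l _ => by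
              rw [(IHfs a b l d).1 (Or.inr (Or.inr hd)) x, mul_zero]
        have z4 : (∑ l : Fin (n + 4), Γchr A l f d x * covRAux A a b c l fs x) = 0 := by
          rcases h with hb | hc | hd
          · exact Finset.sum_eq_zero fun l _ => by
              rw [(IHfs a b c l).1 (Or.inl hb) x, mul_zero]
          · exact Finset.sum_eq_zero fun l _ => by
              rw [(IHfs a b c l).1 (Or.inr (Or.inl hc)) x, mul_zero]
          · exact Finset.sum_eq_zero fun l _ => by rw [Γchr_lowP A (Or.inr hd) l x, zero_mul]
        have z5 : (∑ s : Fin fs.length, ∑ l : Fin (n + 4),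
            Γchr A l f (fs.get s) x * covRAux A a b c d (fs.set s l) x) = 0 :=
          Finset.sum_eq_zero fun s _ => Finset.sum_eq_zero fun l _ => by
            rw [(IHset s l a b c d).1 h x, mul_zero]
        rw [z1, z2, z3, z4, z5]
        ring
      -- goodness
      · intro hb hc hd
        have hfun : covRAux A a b c d (f :: fs) = fun x =>
            pd f (covRAux A a b c d fs) x
            + ∑ l : Fin (n + 4), Γchr A a f l x * covRAux A l b c d fs x
            - ∑ l : Fin (n + 4), Γchr A l f b x * covRAux A a l c d fs x
            - ∑ l : Fin (n + 4), Γchr A l f c x * covRAux A a b l d fs x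
            - ∑ l : Fin (n + 4), Γchr A l f d x * covRAux A a b c l fs x
            - ∑ s : Fin fs.length, ∑ l : Fin (n + 4),
                Γchr A l f (fs.get s) x * covRAux A a b c d (fs.set s l) x :=
          funext fun x => by rw [covRAux]
        rw [hfun]
        have hexp : ν b + ν c + ν d - ν a - 2 + (((f :: fs).map fun g => ν g - 1).sum)
            = (ν b + ν c + ν d - ν a - 2 + ((fs.map fun g => ν g - 1).sum)) + (ν f - 1) := by
          simp [List.map_cons, List.sum_cons]; ring
        rw [hexp]
        set T : ℤ := (ν b + ν c + ν d - ν a - 2 + ((fs.map fun g => ν g - 1).sum)) + (ν f - 1)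
          with hT
        refine Good.sub (Good.sub (Good.sub (Good.sub (Good.add ?_ ?_) ?_) ?_) ?_) ?_
        · -- pd term
          by_cases hk : keep f
          · exact Good.of_eq (((IHfs a b c d).2.1 hb hc hd).pd_keep hk) (by rw [hT]; ring)
          · exact Good.zero' fun x => ((IHfs a b c d).2.1 hb hc hd).pd_not_keep hk x
        · refine Good.sum _ fun l _ => ?_
          by_cases hfl : notP f ∧ notP l
          · exact Good.of_eq ((good_Γchr A hfl.1 hfl.2 a).mul
              ((IHfs l b c d).2.1 hb hc hd)) (by rw [hT]; ring)
          · exact Good.zero' fun x => by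
              rw [Γchr_lowP A (not_and_or.mp hfl) a x, zero_mul]
        · refine Good.sum _ fun l _ => ?_
          by_cases hl : notP l
          · by_cases hf : notP f
            · exact Good.of_eq ((good_Γchr A hf hb l).mul
                ((IHfs a l c d).2.1 hl hc hd)) (by rw [hT]; ring)
            · exact Good.zero' fun x => by rw [Γchr_lowP A (Or.inl hf) l x, zero_mul]
          · exact Good.zero' fun x => by
              rw [(IHfs a l c d).1 (Or.inl hl) x, mul_zero]
        · refine Good.sum _ fun l _ => ?_
          by_cases hl : notP l
          · by_cases hf : notP f
            · exact Good.of_eq ((good_Γchr A hf hc l).mul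
                ((IHfs a b l d).2.1 hb hl hd)) (by rw [hT]; ring)
            · exact Good.zero' fun x => by rw [Γchr_lowP A (Or.inl hf) l x, zero_mul]
          · exact Good.zero' fun x => by
              rw [(IHfs a b l d).1 (Or.inr (Or.inl hl)) x, mul_zero]
        · refine Good.sum _ fun l _ => ?_
          by_cases hl : notP l
          · by_cases hf : notP f
            · exact Good.of_eq ((good_Γchr A hf hd l).mul
                ((IHfs a b c l).2.1 hb hc hl)) (by rw [hT]; ring)
            · exact Good.zero' fun x => by rw [Γchr_lowP A (Or.inl hf) l x, zero_mul]
          · exact Good.zero' fun x => by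
              rw [(IHfs a b c l).1 (Or.inr (Or.inr hl)) x, mul_zero]
        · refine Good.sum _ fun s _ => Good.sum _ fun l _ => ?_
          by_cases hfg : notP f ∧ notP (fs.get s)
          · refine Good.of_eq ((good_Γchr A hfg.1 hfg.2 l).mul
              ((IHset s l a b c d).2.1 hb hc hd)) ?_
            rw [map_sum_set (fun g => ν g - 1) fs s l, hT]
            ring
          · exact Good.zero' fun x => by
              rw [Γchr_lowP A (not_and_or.mp hfg) l x, zero_mul]
      -- antisymmetry in the last two lower slots
      · intro x
        rw [covRAux, covRAux]
        have e0 : pd f (covRAux A a b c d fs) x = - pd f (covRAux A a b d c fs) x := by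
          have hfn : covRAux A a b c d fs = fun y => - covRAux A a b d c fs y :=
            funext fun y => (IHfs a b c d).2.2 y
          rw [hfn, pd_neg]
        have e1 : (∑ l : Fin (n + 4), Γchr A a f l x * covRAux A l b c d fs x)
            = - ∑ l : Fin (n + 4), Γchr A a f l x * covRAux A l b d c fs x := by
          rw [← Finset.sum_neg_distrib]
          exact Finset.sum_congr rfl fun l _ => by rw [(IHfs l b c d).2.2 x]; ring
        have e2 : (∑ l : Fin (n + 4), Γchr A l f b x * covRAux A a l c d fs x)
            = - ∑ l : Fin (n + 4), Γchr A l f b x * covRAux A a l d c fs x := by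
          rw [← Finset.sum_neg_distrib]
          exact Finset.sum_congr rfl fun l _ => by rw [(IHfs a l c d).2.2 x]; ring
        have e3 : (∑ l : Fin (n + 4), Γchr A l f c x * covRAux A a b l d fs x)
            = - ∑ l : Fin (n + 4), Γchr A l f c x * covRAux A a b d l fs x := by
          rw [← Finset.sum_neg_distrib]
          exact Finset.sum_congr rfl fun l _ => by rw [(IHfs a b l d).2.2 x]; ring
        have e4 : (∑ l : Fin (n + 4), Γchr A l f d x * covRAux A a b c l fs x)
            = - ∑ l : Fin (n + 4), Γchr A l f d x * covRAux A a b l c fs x := by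
          rw [← Finset.sum_neg_distrib]
          exact Finset.sum_congr rfl fun l _ => by
            rw [show covRAux A a b c l fs x = - covRAux A a b l c fs x from
              (IHfs a b c l).2.2 x]
            ring
        have e5 : (∑ s : Fin fs.length, ∑ l : Fin (n + 4),
              Γchr A l f (fs.get s) x * covRAux A a b c d (fs.set s l) x)
            = - ∑ s : Fin fs.length, ∑ l : Fin (n + 4),
              Γchr A l f (fs.get s) x * covRAux A a b d c (fs.set s l) x := by
          rw [← Finset.sum_neg_distrib]
          refine Finset.sum_congr rfl fun s _ => ?_
          rw [← Finset.sum_neg_distrib]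
          exact Finset.sum_congr rfl fun l _ => by rw [(IHset s l a b c d).2.2 x]; ring
        rw [e0, e1, e2, e3, e4, e5]
        ring
/-- A good function of negative weight vanishes identically. -/
lemma Good.vanish {k : ℤ} {f : Pt n → ℝ} (h : Good k f) (hk : k < 0) (x : Pt n) :
    f x = 0 := by
  by_contra hfx
  have hfx' : 0 < |f x| := abs_pos.mpr hfx
  have hcont : Continuous fun t : ℝ => f (scL t x) := by
    refine h.smooth.continuous.comp ?_
    refine continuous_pi fun a => ?_
    have he : (fun t : ℝ => scL t x a) = fun t : ℝ => if isE a then t * x a else x a := by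
      funext t; rw [scL_apply]
    rw [he]
    split
    · exact continuous_id.mul continuous_const
    · exact continuous_const
  obtain ⟨δ, hδ, hball⟩ := Metric.continuousAt_iff.mp hcont.continuousAt (ε := 1) one_pos
  set M := |f (scL 0 x)| + 1 with hM
  have hM1 : 1 ≤ M := by
    have := abs_nonneg (f (scL 0 x)); linarith
  set t := min (δ / 2) (min 1 (|f x| / (2 * M))) with ht
  have ht0 : 0 < t := by
    refine lt_min (by linarith) (lt_min one_pos ?_)
    positivity
  have ht1 : t ≤ 1 := le_trans (min_le_right _ _) (min_le_left _ _)
  have htδ : t < δ := lt_of_le_of_lt (min_le_left _ _) (by linarith)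
  have hb : |f (scL t x) - f (scL 0 x)| < 1 := by
    have hdist : dist t (0 : ℝ) < δ := by
      rw [Real.dist_eq, sub_zero, abs_of_pos ht0]; exact htδ
    have := hball hdist
    rwa [Real.dist_eq] at this
  have hgt : |f (scL t x)| ≤ M := by
    have h2 : |f (scL t x)| - |f (scL 0 x)| ≤ |f (scL t x) - f (scL 0 x)| :=
      abs_sub_abs_le_abs_sub _ _
    rw [hM]; linarith
  set m : ℕ := (-k).toNat with hm
  have hmk : (m : ℤ) = -k := Int.toNat_of_nonneg (by omega)
  have hm1 : m ≠ 0 := by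
    intro h0
    rw [h0] at hmk
    simp at hmk
    omega
  have hpow : t ^ m * t ^ k = 1 := by
    rw [← zpow_natCast t m, ← zpow_add₀ (ne_of_gt ht0), hmk]
    simp
  have key : |f x| = t ^ m * |f (scL t x)| := by
    rw [h.scale t ht0 x, abs_mul, abs_of_pos (zpow_pos ht0 k), ← mul_assoc, hpow, one_mul]
  have hle : |f x| ≤ t * M := by
    calc |f x| = t ^ m * |f (scL t x)| := key
    _ ≤ t ^ m * M := by
        have := pow_pos ht0 m
        exact mul_le_mul_of_nonneg_left hgt (by positivity)
    _ ≤ t * M := by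
        have hpm : t ^ m ≤ t := pow_le_of_le_one ht0.le ht1 hm1
        exact mul_le_mul_of_nonneg_right hpm (by linarith)
  have htM : t ≤ |f x| / (2 * M) := le_trans (min_le_right _ _) (min_le_right _ _)
  have : t * M ≤ |f x| / 2 := by
    have hM0 : (0 : ℝ) < M := by linarith
    calc t * M ≤ (|f x| / (2 * M)) * M := mul_le_mul_of_nonneg_right htM (by linarith)
    _ = |f x| / 2 := by field_simp
  have hcontr : |f x| ≤ |f x| / 2 := le_trans hle this
  linarith

lemma list_sum_nonpos : ∀ {l : List ℤ}, (∀ z ∈ l, z ≤ 0) → l.sum ≤ 0 := by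
  intro l
  induction l with
  | nil => simp
  | cons z l ih =>
      intro h
      have h1 := h z List.mem_cons_self
      have h2 := ih fun w hw => h w (List.mem_cons_of_mem z hw)
      simp only [List.sum_cons]
      omega

lemma list_all_zero : ∀ {l : List ℤ}, (∀ z ∈ l, z ≤ 0) → 0 ≤ l.sum → ∀ z ∈ l, z = 0 := by
  intro l
  induction l with
  | nil => simp
  | cons z l ih =>
      intro h hs w hw
      have h1 := h z List.mem_cons_self
      have h2 : ∀ v ∈ l, v ≤ 0 := fun v hv => h v (List.mem_cons_of_mem z hv)
      have h3 : l.sum ≤ 0 := list_sum_nonpos h2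
      simp only [List.sum_cons] at hs
      rcases List.mem_cons.mp hw with rfl | hw'
      · omega
      · exact ih h2 (by omega) w hw'
/-- If `R^î_{ĵ,b,c;f_1;…;f_r}(x) ≠ 0` then `b, c, f_1, …, f_r ∈ {n+3, n+4}` and `b ≠ c`. -/
theorem statement15 (n N : ℕ) (hn : 1 ≤ n) (hN : 1 ≤ N)
    (A : Fin N → Matrix (Fin n) (Fin n) ℝ) (hA : ∀ α, (A α)ᵀ = -A α) :
    ∀ (fs : List (Fin (n + 4))) (b c : Fin (n + 4)) (i j : Fin n) (x : Pt n),
      covR A (ehat i) (ehat j) b c fs x ≠ 0 →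
      (b = q1 n ∨ b = q2 n) ∧ (c = q1 n ∨ c = q2 n) ∧ b ≠ c ∧
        ∀ f ∈ fs, f = q1 n ∨ f = q2 n := by
  intro fs b c i j x hne
  unfold covR at hne
  have main := covRAux_main A fs.reverse.length fs.reverse rfl (ehat i) (ehat j) b c
  have hb : notP b := by
    by_contra h; exact hne (main.1 (Or.inr (Or.inl h)) x)
  have hc : notP c := by
    by_contra h; exact hne (main.1 (Or.inr (Or.inr h)) x)
  have hgood := main.2.1 ⟨ehat_ne_p1, ehat_ne_p2⟩ hb hc
  set S : ℤ := ((fs.reverse.map fun f => ν f - 1).sum) with hS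
  have hK : ¬ (ν (ehat j) + ν b + ν c - ν (ehat i) - 2 + S < 0) := by
    intro hneg
    exact hne (hgood.vanish hneg x)
  have hSle : S ≤ 0 := by
    refine list_sum_nonpos ?_
    intro z hz
    obtain ⟨f, hf, rfl⟩ := List.mem_map.mp hz
    have := ν_le_one f
    omega
  have hνb := ν_le_one b
  have hνc := ν_le_one c
  rw [ν_ehat, ν_ehat] at hK
  have hνb1 : ν b = 1 := by omega
  have hνc1 : ν c = 1 := by omega
  have hS0 : (0 : ℤ) ≤ S := by omega
  refine ⟨eq_q_of_ν_eq_one hνb1, eq_q_of_ν_eq_one hνc1, ?_, ?_⟩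
  · rintro rfl
    have hanti := main.2.2 x
    exact hne (by linarith)
  · intro f hf
    have hf' : (ν f - 1) ∈ (fs.reverse.map fun f => ν f - 1) :=
      List.mem_map.mpr ⟨f, List.mem_reverse.mpr hf, rfl⟩
    have hz : ν f - 1 = 0 := by
      refine list_all_zero ?_ hS0 _ hf'
      intro z hz
      obtain ⟨g, hg, rfl⟩ := List.mem_map.mp hz
      have := ν_le_one g
      omega
    exact eq_q_of_ν_eq_one (by omega)
end
end HolPaper
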